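/- arXiv:1902.08168 — 2 statements merged into one kernel-verified Lean document; each statement's English description precedes it below -/
import Mathlib

section
/- Let ρ ∈ C²([0,T]; ℝ^{n×m}) with ρ(0) = 0, let Σ ∈ ℝ^{m×m} be symmetric, and let g ∈ C¹([0,T]; ℝ^{n×m}) satisfy g(0) = 0 and g'(t)(Σ − ∫₀ᵗ ρ'(u)ᵀ ρ'(u) du) = ρ'(t) for all t ∈ [0,T]. Define p(s) = ρ''(s)ᵀ, q(s) = −g(s)ρ''(s)ᵀ − g'(s)ρ'(s)ᵀ, and λ(t,s) = g(t)p(s) + q(s) ∈ ℝ^{n×n}. Then for every t ∈ [0,T] one has ρ(t) − ∫₀ᵗ λ(t,u)ρ(u) du − g(t)Σ = 0. -/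
open MeasureTheory Matrix Set

noncomputable section

/-- Entrywise interval integral of a matrix-valued function. -/
def matInt {a b : ℕ} (f : ℝ → Matrix (Fin a) (Fin b) ℝ) (s t : ℝ) :
    Matrix (Fin a) (Fin b) ℝ :=
  Matrix.of fun i j => ∫ u in s..t, f u i j

/-!
Splitting the kernel, `∫₀ᵗ λ(t,u) ρ(u) du = g(t) ∫₀ᵗ P + ∫₀ᵗ Q` with `P = ρ''ᵀ ρ` and `Q = q ρ`, so
the claim is that `F(t) = ρ(t) - g(t) ∫₀ᵗ P - ∫₀ᵗ Q - g(t) Σ` vanishes. As `F(0) = 0`, it suffices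
that `F' = 0`. Integrating by parts, `∫₀ᵗ P = ρ'(t)ᵀ ρ(t) - ∫₀ᵗ ρ'ᵀ ρ'`; with this and the formula
for `q`, everything in `F'` cancels except `ρ' - g' (Σ - ∫₀ᵗ ρ'ᵀ ρ')`, which vanishes by the
equation defining `g`.
-/

-- Any norm would do; it only serves to speak of derivatives of matrix-valued functions.
open scoped Matrix.Norms.Elementwise

section MatrixCalculus

variable {l m n : Type*} {s : Set ℝ} {x : ℝ}

theorem continuousOn_matrix_iff {f : ℝ → Matrix m n ℝ} :
    ContinuousOn f s ↔ ∀ i j, ContinuousOn (fun u => f u i j) s :=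
  continuousOn_pi.trans (forall_congr' fun _ => continuousOn_pi)

theorem ContinuousOn.matrix_mul [Fintype m] {f : ℝ → Matrix l m ℝ} {g : ℝ → Matrix m n ℝ}
    (hf : ContinuousOn f s) (hg : ContinuousOn g s) : ContinuousOn (fun u => f u * g u) s :=
  continuousOn_iff_continuous_domRestrict.2 <|
    (continuousOn_iff_continuous_domRestrict.1 hf).matrix_mul
      (continuousOn_iff_continuous_domRestrict.1 hg)

theorem ContinuousOn.matrix_transpose {f : ℝ → Matrix m n ℝ} (hf : ContinuousOn f s) :
    ContinuousOn (fun u => (f u)ᵀ) s :=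
  continuousOn_iff_continuous_domRestrict.2
    (continuousOn_iff_continuous_domRestrict.1 hf).matrix_transpose

theorem hasDerivWithinAt_matrix_iff [Fintype m] [Fintype n] {f : ℝ → Matrix m n ℝ}
    {f' : Matrix m n ℝ} :
    HasDerivWithinAt f f' s x ↔ ∀ i j, HasDerivWithinAt (fun u => f u i j) (f' i j) s x :=
  hasDerivWithinAt_pi.trans (forall_congr' fun _ => hasDerivWithinAt_pi)

theorem HasDerivWithinAt.matrix_transpose [Fintype m] [Fintype n] {f : ℝ → Matrix m n ℝ}
    {f' : Matrix m n ℝ}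
    (hf : HasDerivWithinAt f f' s x) : HasDerivWithinAt (fun u => (f u)ᵀ) f'ᵀ s x :=
  hasDerivWithinAt_matrix_iff.2 fun i j => hasDerivWithinAt_matrix_iff.1 hf j i

theorem HasDerivWithinAt.matrix_mul [Fintype l] [Fintype m] [Fintype n]
    {f : ℝ → Matrix l m ℝ} {g : ℝ → Matrix m n ℝ} {f' : Matrix l m ℝ} {g' : Matrix m n ℝ}
    (hf : HasDerivWithinAt f f' s x) (hg : HasDerivWithinAt g g' s x) :
    HasDerivWithinAt (fun u => f u * g u) (f' * g x + f x * g') s x := by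
  refine hasDerivWithinAt_matrix_iff.2 fun i j => ?_
  simp only [mul_apply, Matrix.add_apply, ← Finset.sum_add_distrib]
  exact HasDerivWithinAt.fun_sum fun k _ =>
    (hasDerivWithinAt_matrix_iff.1 hf i k).mul (hasDerivWithinAt_matrix_iff.1 hg k j)

end MatrixCalculus

section MatInt

variable {k m n : ℕ} {a b x : ℝ} {s : Set ℝ}

theorem ContinuousOn.intervalIntegrable_apply_of_Icc {f : ℝ → Matrix (Fin m) (Fin n) ℝ}
    (hab : a ≤ b) (hf : ContinuousOn f (Icc a b)) (i : Fin m) (j : Fin n) :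
    IntervalIntegrable (fun u => f u i j) volume a b :=
  (continuousOn_matrix_iff.1 hf i j).intervalIntegrable_of_Icc hab

@[simp]
theorem matInt_self (f : ℝ → Matrix (Fin m) (Fin n) ℝ) (a : ℝ) : matInt f a a = 0 := by
  ext; simp [matInt]

theorem matInt_add {f g : ℝ → Matrix (Fin m) (Fin n) ℝ}
    (hf : ∀ i j, IntervalIntegrable (fun u => f u i j) volume a b)
    (hg : ∀ i j, IntervalIntegrable (fun u => g u i j) volume a b) :
    matInt (fun u => f u + g u) a b = matInt f a b + matInt g a b := by
  ext i j
  exact intervalIntegral.integral_add (hf i j) (hg i j)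

theorem matInt_mul_left (A : Matrix (Fin k) (Fin m) ℝ) {f : ℝ → Matrix (Fin m) (Fin n) ℝ}
    (hf : ∀ i j, IntervalIntegrable (fun u => f u i j) volume a b) :
    matInt (fun u => A * f u) a b = A * matInt f a b := by
  ext i j
  simp only [matInt, of_apply, mul_apply]
  rw [intervalIntegral.integral_finsetSum fun l _ => (hf l j).const_mul _]
  simp only [intervalIntegral.integral_const_mul]

theorem hasDerivWithinAt_matInt {f : ℝ → Matrix (Fin m) (Fin n) ℝ}
    (hf : ContinuousOn f (Icc a b)) (hx : x ∈ Icc a b) :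
    HasDerivWithinAt (fun y => matInt f a y) (f x) (Icc a b) x := by
  have : Fact (x ∈ Icc a b) := ⟨hx⟩
  refine hasDerivWithinAt_matrix_iff.2 fun i j => ?_
  have hfij := continuousOn_matrix_iff.1 hf i j
  exact intervalIntegral.integral_hasDerivWithinAt_right
    ((hfij.mono (uIcc_of_le hx.1 ▸ Icc_subset_Icc_right hx.2)).intervalIntegrable)
    (hfij.stronglyMeasurableAtFilter_nhdsWithin measurableSet_Icc x) (hfij x hx)

theorem matInt_eq_sub_of_hasDerivWithinAt {F f : ℝ → Matrix (Fin m) (Fin n) ℝ} (hab : a ≤ b)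
    (hs : Icc a b ⊆ s) (hF : ∀ x ∈ Icc a b, HasDerivWithinAt F (f x) s x)
    (hf : ContinuousOn f (Icc a b)) :
    matInt f a b = F b - F a := by
  ext i j
  have hFij x (hx : x ∈ Icc a b) := hasDerivWithinAt_matrix_iff.1 (hF x hx) i j
  refine intervalIntegral.integral_eq_sub_of_hasDerivAt_of_le hab
    (fun x hx => ((hFij x hx).continuousWithinAt).mono hs) (fun x hx => ?_)
    (hf.intervalIntegrable_apply_of_Icc hab i j)
  exact (hFij x (Ioo_subset_Icc_self hx)).hasDerivAt
    (Filter.mem_of_superset (Icc_mem_nhds hx.1 hx.2) hs)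

theorem eq_of_hasDerivWithinAt_zero {F : ℝ → Matrix (Fin m) (Fin n) ℝ} (hab : a ≤ b)
    (hs : Icc a b ⊆ s) (hF : ∀ x ∈ Icc a b, HasDerivWithinAt F 0 s x) : F b = F a := by
  have hzero : matInt (fun _ => (0 : Matrix (Fin m) (Fin n) ℝ)) a b = 0 := by
    ext; simp [matInt]
  exact sub_eq_zero.1
    ((matInt_eq_sub_of_hasDerivWithinAt hab hs hF continuousOn_const).symm.trans hzero)

theorem matInt_deriv_mul_eq_sub {M M' : ℝ → Matrix (Fin k) (Fin m) ℝ}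
    {N N' : ℝ → Matrix (Fin m) (Fin n) ℝ} (hab : a ≤ b) (hs : Icc a b ⊆ s)
    (hM : ∀ x ∈ Icc a b, HasDerivWithinAt M (M' x) s x)
    (hN : ∀ x ∈ Icc a b, HasDerivWithinAt N (N' x) s x)
    (hM' : ContinuousOn M' (Icc a b)) (hN' : ContinuousOn N' (Icc a b)) :
    matInt (fun u => M' u * N u) a b
      = M b * N b - M a * N a - matInt (fun u => M u * N' u) a b := by
  have hMc : ContinuousOn M (Icc a b) := fun x hx => ((hM x hx).continuousWithinAt).mono hs
  have hNc : ContinuousOn N (Icc a b) := fun x hx => ((hN x hx).continuousWithinAt).mono hs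
  have hFTC := matInt_eq_sub_of_hasDerivWithinAt hab hs
    (fun x hx => (hM x hx).matrix_mul (hN x hx)) ((hM'.matrix_mul hNc).add (hMc.matrix_mul hN'))
  rw [matInt_add ((hM'.matrix_mul hNc).intervalIntegrable_apply_of_Icc hab)
    ((hMc.matrix_mul hN').intervalIntegrable_apply_of_Icc hab)] at hFTC
  rw [← hFTC]
  abel

end MatInt

theorem sub_matInt_kernel_mul_sub_mul_eq_zero {m n : ℕ} {T : ℝ}
    {ρ ρ' ρ'' g g' : ℝ → Matrix (Fin n) (Fin m) ℝ} {Sig : Matrix (Fin m) (Fin m) ℝ}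
    (hρ : ∀ t ∈ Icc 0 T, HasDerivWithinAt ρ (ρ' t) (Icc 0 T) t)
    (hρ' : ∀ t ∈ Icc 0 T, HasDerivWithinAt ρ' (ρ'' t) (Icc 0 T) t)
    (hρ''c : ContinuousOn ρ'' (Icc 0 T)) (hρ0 : ρ 0 = 0)
    (hg : ∀ t ∈ Icc 0 T, HasDerivWithinAt g (g' t) (Icc 0 T) t)
    (hg'c : ContinuousOn g' (Icc 0 T)) (hg0 : g 0 = 0)
    (hgeq : ∀ t ∈ Icc 0 T, g' t * (Sig - matInt (fun u => (ρ' u)ᵀ * ρ' u) 0 t) = ρ' t)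
    {t : ℝ} (ht : t ∈ Icc 0 T) :
    ρ t - matInt (fun u => (g t * (ρ'' u)ᵀ + (-(g u * (ρ'' u)ᵀ) - g' u * (ρ' u)ᵀ)) * ρ u) 0 t
      - g t * Sig = 0 := by
  have hρc : ContinuousOn ρ (Icc 0 T) := fun x hx => (hρ x hx).continuousWithinAt
  have hρ'c : ContinuousOn ρ' (Icc 0 T) := fun x hx => (hρ' x hx).continuousWithinAt
  have hgc : ContinuousOn g (Icc 0 T) := fun x hx => (hg x hx).continuousWithinAt
  set P := fun u => (ρ'' u)ᵀ * ρ u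
  set Q := fun u => (-(g u * (ρ'' u)ᵀ) - g' u * (ρ' u)ᵀ) * ρ u
  have hPc : ContinuousOn P (Icc 0 T) := hρ''c.matrix_transpose.matrix_mul hρc
  have hQc : ContinuousOn Q (Icc 0 T) := ((hgc.matrix_mul hρ''c.matrix_transpose).neg.sub
    (hg'c.matrix_mul hρ'c.matrix_transpose)).matrix_mul hρc
  have ibp : ∀ x ∈ Icc 0 T, matInt P 0 x
      = (ρ' x)ᵀ * ρ x - matInt (fun u => (ρ' u)ᵀ * ρ' u) 0 x := by
    intro x hx
    have hsub : Icc 0 x ⊆ Icc 0 T := Icc_subset_Icc_right hx.2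
    simpa [hρ0] using matInt_deriv_mul_eq_sub hx.1 hsub
      (fun y hy => (hρ' y (hsub hy)).matrix_transpose) (fun y hy => hρ y (hsub hy))
      (hρ''c.matrix_transpose.mono hsub) (hρ'c.mono hsub)
  have hderiv : ∀ x ∈ Icc 0 T, HasDerivWithinAt
      (fun y => ρ y - g y * matInt P 0 y - matInt Q 0 y - g y * Sig) 0 (Icc 0 T) x := by
    intro x hx
    refine ((((hρ x hx).sub ((hg x hx).matrix_mul (hasDerivWithinAt_matInt hPc hx))).sub
      (hasDerivWithinAt_matInt hQc hx)).sub
      ((hg x hx).matrix_mul (hasDerivWithinAt_const _ _ Sig))).congr_deriv ?_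
    rw [ibp x hx]
    linear_combination (norm := skip) -hgeq x hx
    simp only [P, Q, Matrix.mul_sub, Matrix.sub_mul, Matrix.neg_mul, Matrix.mul_assoc,
      Matrix.mul_zero, add_zero]
    abel
  have hsub : Icc 0 t ⊆ Icc 0 T := Icc_subset_Icc_right ht.2
  have hsplit :
      matInt (fun u => (g t * (ρ'' u)ᵀ + (-(g u * (ρ'' u)ᵀ) - g' u * (ρ' u)ᵀ)) * ρ u) 0 t
        = g t * matInt P 0 t + matInt Q 0 t := by
    rw [← matInt_mul_left _ ((hPc.mono hsub).intervalIntegrable_apply_of_Icc ht.1), ← matInt_add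
      ((continuousOn_const.matrix_mul (hPc.mono hsub)).intervalIntegrable_apply_of_Icc ht.1)
      ((hQc.mono hsub).intervalIntegrable_apply_of_Icc ht.1)]
    simp only [P, Q, Matrix.add_mul, Matrix.mul_assoc]
  rw [hsplit, ← sub_sub]
  simpa [hρ0, hg0] using
    eq_of_hasDerivWithinAt_zero ht.1 hsub fun x hx => hderiv x (hsub hx)

theorem stmt1_general {m n : ℕ} (T : ℝ)
    (ρ ρ' ρ'' : ℝ → Matrix (Fin n) (Fin m) ℝ)
    (hρd : ∀ t ∈ Icc (0:ℝ) T, ∀ i j,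
      HasDerivWithinAt (fun u => ρ u i j) (ρ' t i j) (Icc 0 T) t)
    (hρd' : ∀ t ∈ Icc (0:ℝ) T, ∀ i j,
      HasDerivWithinAt (fun u => ρ' u i j) (ρ'' t i j) (Icc 0 T) t)
    (hρ''c : ∀ i j, ContinuousOn (fun t => ρ'' t i j) (Icc 0 T))
    (hρ0 : ρ 0 = 0)
    (Sig : Matrix (Fin m) (Fin m) ℝ)
    (g g' : ℝ → Matrix (Fin n) (Fin m) ℝ)
    (hgd : ∀ t ∈ Icc (0:ℝ) T, ∀ i j,
      HasDerivWithinAt (fun u => g u i j) (g' t i j) (Icc 0 T) t)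
    (hg'c : ∀ i j, ContinuousOn (fun t => g' t i j) (Icc 0 T))
    (hg0 : g 0 = 0)
    (hgeq : ∀ t ∈ Icc (0:ℝ) T,
      g' t * (Sig - matInt (fun u => (ρ' u)ᵀ * ρ' u) 0 t) = ρ' t)
    (p : ℝ → Matrix (Fin m) (Fin n) ℝ) (hp : ∀ s, p s = (ρ'' s)ᵀ)
    (q : ℝ → Matrix (Fin n) (Fin n) ℝ)
    (hq : ∀ s, q s = -(g s * (ρ'' s)ᵀ) - g' s * (ρ' s)ᵀ)
    (lam : ℝ → ℝ → Matrix (Fin n) (Fin n) ℝ)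
    (hlam : ∀ t s, lam t s = g t * p s + q s) :
    ∀ t ∈ Icc (0:ℝ) T,
      ρ t - matInt (fun u => lam t u * ρ u) 0 t - g t * Sig = 0 := by
  intro t ht
  have hρ x hx := hasDerivWithinAt_matrix_iff.2 (hρd x hx)
  have hρ' x hx := hasDerivWithinAt_matrix_iff.2 (hρd' x hx)
  have hg x hx := hasDerivWithinAt_matrix_iff.2 (hgd x hx)
  obtain rfl : lam = fun t s => g t * p s + q s := funext₂ hlam
  obtain rfl : p = fun s => (ρ'' s)ᵀ := funext hp
  obtain rfl : q = fun s => -(g s * (ρ'' s)ᵀ) - g' s * (ρ' s)ᵀ := funext hq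
  exact sub_matInt_kernel_mul_sub_mul_eq_zero hρ hρ' (continuousOn_matrix_iff.2 hρ''c) hρ0
    hg (continuousOn_matrix_iff.2 hg'c) hg0 hgeq ht

/-- Let `ρ ∈ C²([0,T]; ℝ^{n×m})` with `ρ(0) = 0`, `Σ ∈ ℝ^{m×m}` symmetric,
and `g ∈ C¹([0,T]; ℝ^{n×m})` with `g(0) = 0` and `g'(t)(Σ − ∫₀ᵗ ρ'(u)ᵀ ρ'(u) du) = ρ'(t)` on
`[0,T]`.  With `p(s) = ρ''(s)ᵀ`, `q(s) = −g(s)ρ''(s)ᵀ − g'(s)ρ'(s)ᵀ`,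
`λ(t,s) = g(t)p(s) + q(s)`, one has `ρ(t) − ∫₀ᵗ λ(t,u)ρ(u) du − g(t)Σ = 0` on `[0,T]`. -/
theorem stmt1 {m n : ℕ} (hm : 0 < m) (hn : 0 < n) (T : ℝ) (hT : 0 < T)
    (ρ ρ' ρ'' : ℝ → Matrix (Fin n) (Fin m) ℝ)
    (hρd : ∀ t ∈ Icc (0:ℝ) T, ∀ i j,
      HasDerivWithinAt (fun u => ρ u i j) (ρ' t i j) (Icc 0 T) t)
    (hρd' : ∀ t ∈ Icc (0:ℝ) T, ∀ i j,
      HasDerivWithinAt (fun u => ρ' u i j) (ρ'' t i j) (Icc 0 T) t)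
    (hρ''c : ∀ i j, ContinuousOn (fun t => ρ'' t i j) (Icc 0 T))
    (hρ0 : ρ 0 = 0)
    (Sig : Matrix (Fin m) (Fin m) ℝ) (hSig : Sig.IsSymm)
    (g g' : ℝ → Matrix (Fin n) (Fin m) ℝ)
    (hgd : ∀ t ∈ Icc (0:ℝ) T, ∀ i j,
      HasDerivWithinAt (fun u => g u i j) (g' t i j) (Icc 0 T) t)
    (hg'c : ∀ i j, ContinuousOn (fun t => g' t i j) (Icc 0 T))
    (hg0 : g 0 = 0)
    (hgeq : ∀ t ∈ Icc (0:ℝ) T,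
      g' t * (Sig - matInt (fun u => (ρ' u)ᵀ * ρ' u) 0 t) = ρ' t)
    (p : ℝ → Matrix (Fin m) (Fin n) ℝ) (hp : ∀ s, p s = (ρ'' s)ᵀ)
    (q : ℝ → Matrix (Fin n) (Fin n) ℝ)
    (hq : ∀ s, q s = -(g s * (ρ'' s)ᵀ) - g' s * (ρ' s)ᵀ)
    (lam : ℝ → ℝ → Matrix (Fin n) (Fin n) ℝ)
    (hlam : ∀ t s, lam t s = g t * p s + q s) :
    ∀ t ∈ Icc (0:ℝ) T,
      ρ t - matInt (fun u => lam t u * ρ u) 0 t - g t * Sig = 0 :=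
  stmt1_general T ρ ρ' ρ'' hρd hρd' hρ''c hρ0 Sig g g' hgd hg'c hg0 hgeq p hp q hq lam hlam
end
end

section
/- Let a ∈ ℝ^{m×m} and h ∈ ℝ^{n×m} be such that (a, h) is detectable and (a, I_m) is stabilizable, and let γ_∞ be the unique symmetric positive semidefinite solution of γ aᵀ + a γ + I_m − γ hᵀ h γ = 0. Then λ₀ := min{ −Re λ : λ ∈ ℂ is an eigenvalue of a − γ_∞ hᵀ h } is strictly positive; equivalently, every complex eigenvalue of the matrix a − γ_∞ hᵀ h has negative real part. -/
open Matrix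

noncomputable section

/-- Complexification of a real matrix. -/
def cplx {m n : ℕ} (A : Matrix (Fin m) (Fin n) ℝ) : Matrix (Fin m) (Fin n) ℂ :=
  A.map (Complex.ofReal)

/-- The ℝ-linear embedding of `ℝ^m` into `ℂ^m`. -/
def toCVec {m : ℕ} : (Fin m → ℝ) →ₗ[ℝ] (Fin m → ℂ) where
  toFun v := fun i => (v i : ℂ)
  map_add' x y := by funext i; push_cast; simp
  map_smul' c x := by funext i; simp [Complex.real_smul]

/-- The stable subspace of a real square matrix, as a subspace of `ℂ^m`: the sum of the
generalized eigenspaces associated with eigenvalues with negative real part. -/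
def stableC {m : ℕ} (A : Matrix (Fin m) (Fin m) ℝ) : Submodule ℂ (Fin m → ℂ) :=
  ⨆ (μ : ℂ) (_ : μ.re < 0),
    LinearMap.ker (Matrix.toLin' ((cplx A - μ • (1 : Matrix (Fin m) (Fin m) ℂ)) ^ m))

/-- The stable subspace of a real square matrix, as a real subspace of `ℝ^m`. -/
def stableR {m : ℕ} (A : Matrix (Fin m) (Fin m) ℝ) : Submodule ℝ (Fin m → ℝ) :=
  Submodule.comap toCVec ((stableC A).restrictScalars ℝ)

/-- The unstable subspace: the orthogonal complement of the stable subspace in `ℝ^m`. -/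
def unstableR {m : ℕ} (A : Matrix (Fin m) (Fin m) ℝ) : Submodule ℝ (Fin m → ℝ) where
  carrier := {w | ∀ v ∈ stableR A, v ⬝ᵥ w = 0}
  add_mem' := by
    intro a b ha hb v hv
    simp [dotProduct_add, ha v hv, hb v hv]
  zero_mem' := by
    intro v hv
    simp
  smul_mem' := by
    intro c a ha v hv
    simp [dotProduct_smul, ha v hv]

/-- Kernel of the stacked matrix `[D; DA; …; DA^{m−1}]`. -/
def kerStack {m n : ℕ} (A : Matrix (Fin m) (Fin m) ℝ) (D : Matrix (Fin n) (Fin m) ℝ) :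
    Submodule ℝ (Fin m → ℝ) :=
  ⨅ i : Fin m, LinearMap.ker (Matrix.toLin' (D * A ^ (i : ℕ)))

/-- `(A, D)` is detectable if the kernel of `[D; DA; …; DA^{m−1}]` is contained in the
stable subspace of `A`. -/
def Detectable {m n : ℕ} (A : Matrix (Fin m) (Fin m) ℝ) (D : Matrix (Fin n) (Fin m) ℝ) : Prop :=
  kerStack A D ≤ stableR A

/-- Column span of `(B, AB, …, A^{m−1}B)`. -/
def colSpan {m l : ℕ} (A : Matrix (Fin m) (Fin m) ℝ) (B : Matrix (Fin m) (Fin l) ℝ) :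
    Submodule ℝ (Fin m → ℝ) :=
  ⨆ i : Fin m, LinearMap.range (Matrix.toLin' (A ^ (i : ℕ) * B))

/-- `(A, B)` is stabilizable if the unstable subspace of `A` is contained in the column
span of `(B, AB, …, A^{m−1}B)`. -/
def Stabilizable {m l : ℕ} (A : Matrix (Fin m) (Fin m) ℝ) (B : Matrix (Fin m) (Fin l) ℝ) : Prop :=
  unstableR A ≤ colSpan A B


/-! The Riccati equation says that the closed-loop matrix `A = a - γ hᵀ h` satisfies the Lyapunov
identity `A γ + γ Aᵀ = -(1 + (h γ)ᵀ (h γ))`, whose right-hand side is negative definite. Testing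
it against a left eigenvector `v` of `A` for the eigenvalue `μ` gives
`2 Re μ · v* γ v = -v* (1 + (h γ)ᵀ (h γ)) v < 0`, and since `v* γ v ≥ 0` this forces `Re μ < 0`. -/

open scoped ComplexOrder

namespace Matrix

variable {ι : Type*} [Fintype ι] [DecidableEq ι]

lemma exists_vecMul_eq_smul_of_isRoot_charpoly {K : Type*} [Field K] {M : Matrix ι ι K} {μ : K}
    (hμ : M.charpoly.IsRoot μ) : ∃ v ≠ 0, v ᵥ* M = μ • v := by
  have hdet : (scalar ι μ - M).det = 0 := by rwa [← eval_charpoly]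
  obtain ⟨v, hv0, hv⟩ := exists_vecMul_eq_zero_iff.mpr hdet
  refine ⟨v, hv0, ?_⟩
  rw [vecMul_sub, sub_eq_zero] at hv
  simpa using hv.symm

theorem re_lt_zero_of_isRoot_charpoly_of_lyapunov {𝕜 : Type*} [RCLike 𝕜] {M P Q : Matrix ι ι 𝕜}
    (hP : P.PosSemidef) (hQ : Q.PosDef) (hlyap : M * P + P * Mᴴ + Q = 0) {μ : 𝕜}
    (hμ : M.charpoly.IsRoot μ) : RCLike.re μ < 0 := by
  obtain ⟨v, hv0, hv⟩ := exists_vecMul_eq_smul_of_isRoot_charpoly hμ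
  set y := star v
  have hy : y ≠ 0 := star_ne_zero.mpr hv0
  have hMy : Mᴴ *ᵥ y = star μ • y := by rw [← star_vecMul, hv, star_smul]
  have hquad : (μ + star μ) * (star y ⬝ᵥ P *ᵥ y) = -(star y ⬝ᵥ Q *ᵥ y) := by
    have := congrArg (fun X => star y ⬝ᵥ X *ᵥ y) hlyap
    simp only [add_mulVec, dotProduct_add, ← mulVec_mulVec, hMy, zero_mulVec,
      dotProduct_zero] at this
    rw [dotProduct_mulVec, star_star, hv] at this
    simp only [mulVec_smul, dotProduct_smul, smul_dotProduct, smul_eq_mul] at this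
    rw [star_star]
    linear_combination this
  have hre : 2 * RCLike.re μ * RCLike.re (star y ⬝ᵥ P *ᵥ y) =
      -RCLike.re (star y ⬝ᵥ Q *ᵥ y) := by
    rw [RCLike.star_def, RCLike.add_conj] at hquad
    simpa using congrArg RCLike.re hquad
  nlinarith [hP.re_dotProduct_nonneg y, hQ.re_dotProduct_pos hy]

theorem closed_loop_lyapunov_of_riccati {R κ : Type*} [CommRing R] [Fintype κ]
    {a γ : Matrix ι ι R} {h : Matrix κ ι R} (hγ : γᵀ = γ)
    (hric : γ * aᵀ + a * γ + 1 - γ * hᵀ * h * γ = 0) :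
    (a - γ * hᵀ * h) * γ + γ * (a - γ * hᵀ * h)ᵀ + (1 + (h * γ)ᵀ * (h * γ)) = 0 := by
  rw [← hric]
  simp only [transpose_sub, transpose_mul, transpose_transpose, hγ, sub_mul, mul_sub,
    Matrix.mul_assoc]
  abel

end Matrix

section Complexification

variable {p q r : ℕ}

lemma cplx_add (M N : Matrix (Fin p) (Fin q) ℝ) : cplx (M + N) = cplx M + cplx N :=
  Matrix.map_add _ Complex.ofReal_add M N

lemma cplx_mul (M : Matrix (Fin p) (Fin q) ℝ) (N : Matrix (Fin q) (Fin r) ℝ) :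
    cplx (M * N) = cplx M * cplx N :=
  Matrix.map_mul (f := Complex.ofRealHom)

lemma cplx_zero : cplx (0 : Matrix (Fin p) (Fin q) ℝ) = 0 :=
  Matrix.map_zero _ Complex.ofReal_zero

lemma cplx_one : cplx (1 : Matrix (Fin p) (Fin p) ℝ) = 1 :=
  Matrix.map_one _ Complex.ofReal_zero Complex.ofReal_one

lemma cplx_transpose (M : Matrix (Fin p) (Fin q) ℝ) : cplx Mᵀ = (cplx M)ᴴ := by
  ext i j
  simp [cplx, Matrix.conjTranspose_apply]

open scoped MatrixOrder in
lemma Matrix.PosSemidef.cplx {P : Matrix (Fin p) (Fin p) ℝ} (hP : P.PosSemidef) :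
    (cplx P).PosSemidef := by
  obtain ⟨B, rfl⟩ := CStarAlgebra.nonneg_iff_eq_star_mul_self.mp hP.nonneg
  rw [star_eq_conjTranspose, conjTranspose_eq_transpose_of_trivial, cplx_mul, cplx_transpose]
  exact posSemidef_conjTranspose_mul_self _

end Complexification

theorem stmt12_general {m n : ℕ}
    (a : Matrix (Fin m) (Fin m) ℝ) (h : Matrix (Fin n) (Fin m) ℝ)
    (γ : Matrix (Fin m) (Fin m) ℝ) (hγ : γ.PosSemidef)
    (hric : γ * aᵀ + a * γ + 1 - γ * hᵀ * h * γ = 0) :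
    ∀ μ : ℂ, (cplx (a - γ * hᵀ * h)).charpoly.IsRoot μ → μ.re < 0 := by
  intro μ hμ
  have hγT : γᵀ = γ := by simpa [conjTranspose_eq_transpose_of_trivial] using hγ.isHermitian.eq
  have hlyap := congrArg cplx (closed_loop_lyapunov_of_riccati hγT hric)
  simp only [cplx_add, cplx_mul, cplx_one, cplx_transpose, cplx_zero] at hlyap
  exact re_lt_zero_of_isRoot_charpoly_of_lyapunov hγ.cplx
    (PosDef.one.add_posSemidef (posSemidef_conjTranspose_mul_self _)) hlyap hμ

/-- If `(a, h)` is detectable, `(a, I_m)` is stabilizable, and `γ` is the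
unique symmetric positive semidefinite solution of the algebraic Riccati equation
`γ aᵀ + a γ + I − γ hᵀ h γ = 0`, then every complex eigenvalue of `a − γ hᵀ h` (i.e. every
complex root of its characteristic polynomial) has strictly negative real part; equivalently
`λ₀ = min{−Re λ : λ eigenvalue of a − γ hᵀ h}` is strictly positive. -/
theorem stmt12 {m n : ℕ} (hm : 0 < m) (hn : 0 < n)
    (a : Matrix (Fin m) (Fin m) ℝ) (h : Matrix (Fin n) (Fin m) ℝ)
    (hdet : Detectable a h) (hstab : Stabilizable a (1 : Matrix (Fin m) (Fin m) ℝ))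
    (γ : Matrix (Fin m) (Fin m) ℝ) (hγ : γ.PosSemidef)
    (hric : γ * aᵀ + a * γ + 1 - γ * hᵀ * h * γ = 0)
    (huniq : ∀ γ' : Matrix (Fin m) (Fin m) ℝ,
      γ'.PosSemidef → γ' * aᵀ + a * γ' + 1 - γ' * hᵀ * h * γ' = 0 → γ' = γ) :
    ∀ μ : ℂ, (cplx (a - γ * hᵀ * h)).charpoly.IsRoot μ → μ.re < 0 :=
  stmt12_general a h γ hγ hric
end
end
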